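/- arXiv:1703.03887 — 2 statements merged into one kernel-verified Lean document; each statement's English description precedes it below -/
import Mathlib

section
/- For every density matrix ρ on ℂ² (i.e., ρ positive semidefinite with trace 1), tr((1/2)(|0⟩⟨0| + |+⟩⟨+|)·ρ) ≤ cos²(π/8), and there exists a density matrix achieving equality. Hence a cheating Alice in the coin flipping protocol wins with probability at most cos²(π/8). -/
open scoped ComplexOrder

noncomputable section

def ket0 : Fin 2 → ℂ := ![1, 0]
def ketP : Fin 2 → ℂ := ![(Real.sqrt 2)⁻¹, (Real.sqrt 2)⁻¹]

/-- the measurement operator (1/2)(|0⟩⟨0| + |+⟩⟨+|) -/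
def M : Matrix (Fin 2) (Fin 2) ℂ :=
  (1/2 : ℂ) • (Matrix.vecMulVec ket0 (star ket0) + Matrix.vecMulVec ketP (star ketP))


lemma trace_formula (ρ : Matrix (Fin 2) (Fin 2) ℂ) :
    ((M * ρ).trace).re = 3/4 * (ρ 0 0).re + 1/4 * (ρ 1 0).re + 1/4 * (ρ 0 1).re + 1/4 * (ρ 1 1).re := by
  have h2 : ((Real.sqrt 2 : ℝ) : ℂ)⁻¹ * ((Real.sqrt 2 : ℝ) : ℂ)⁻¹ = 1/2 := by
    rw [← mul_inv]; norm_cast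
    rw [Real.mul_self_sqrt (by norm_num : (0:ℝ) ≤ 2)]; norm_num
  set_option maxRecDepth 4000 in
  simp only [M, Matrix.trace, Matrix.mul_apply, Fin.sum_univ_two, ket0, ketP,
    Matrix.vecMulVec_apply, Matrix.diag_apply, Matrix.smul_apply, Matrix.add_apply,
    Matrix.cons_val_zero, Matrix.cons_val_one, Matrix.head_cons, Pi.star_apply, star_one,
    RCLike.star_def, map_inv₀, Complex.conj_ofReal, smul_eq_mul]
  rw [h2]
  simp only [map_zero, map_one, one_mul, mul_one, zero_mul, mul_zero, add_zero, zero_add,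
    Complex.add_re, Complex.mul_re, Complex.mul_im]
  norm_num
  ring

lemma cos_sq_val : Real.cos (Real.pi / 8) ^ 2 = 1/2 + Real.sqrt 2 / 4 := by
  have := Real.cos_sq (Real.pi / 8)
  rw [show 2 * (Real.pi / 8) = Real.pi / 4 by ring] at this
  rw [this, Real.cos_pi_div_four]; ring

-- bound part
lemma bound_part (ρ : Matrix (Fin 2) (Fin 2) ℂ) (hpsd : ρ.PosSemidef) (htr : ρ.trace = 1) :
    ((M * ρ).trace).re ≤ Real.cos (Real.pi / 8) ^ 2 := by
  rw [trace_formula, cos_sq_val]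
  have hH := hpsd.isHermitian
  have h10 : ρ 1 0 = (starRingEnd ℂ) (ρ 0 1) := by
    rw [← hH.apply 0 1]; simp
  have h00 : (starRingEnd ℂ) (ρ 0 0) = ρ 0 0 := hH.apply 0 0
  have h11 : (starRingEnd ℂ) (ρ 1 1) = ρ 1 1 := hH.apply 1 1
  have h00im : (ρ 0 0).im = 0 := by
    have := congrArg Complex.im h00; simpa using by linarith [this, Complex.conj_im (ρ 0 0)]
  have h11im : (ρ 1 1).im = 0 := by
    have := congrArg Complex.im h11; simpa using by linarith [this, Complex.conj_im (ρ 1 1)]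
  set a := (ρ 0 0).re with ha'
  set d := (ρ 1 1).re with hd'
  set r := (ρ 0 1).re with hr'
  set i := (ρ 0 1).im with hi'
  have key : ∀ x0 x1 : ℂ, 0 ≤ ((starRingEnd ℂ) x0 * (ρ 0 0 * x0 + ρ 0 1 * x1) +
      (starRingEnd ℂ) x1 * (ρ 1 0 * x0 + ρ 1 1 * x1)).re := by
    intro x0 x1
    have := hpsd.dotProduct_mulVec_nonneg ![x0, x1]
    rw [Complex.nonneg_iff] at this
    have h := this.1
    simpa [dotProduct, Matrix.mulVec, Fin.sum_univ_two, RCLike.star_def,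
      mul_comm] using h
  have had : a + d = 1 := by
    have := congrArg Complex.re htr
    simpa [Matrix.trace, Fin.sum_univ_two] using this
  have ha : 0 ≤ a := by simpa [Complex.mul_re, Complex.mul_im, h00im] using key 1 0
  have hd : 0 ≤ d := by simpa [Complex.mul_re, Complex.mul_im, h11im] using key 0 1
  -- determinant-type inequalities
  have hdet1 : 0 ≤ a * (a * d - (r^2 + i^2)) := by
    have := key (ρ 0 1) (-(ρ 0 0))
    rw [h10] at this
    simp only [Complex.mul_re, Complex.mul_im, Complex.add_re, Complex.add_im,
      Complex.neg_re, Complex.neg_im, Complex.conj_re, Complex.conj_im, h00im] at this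
    nlinarith [this]
  have hdet2 : 0 ≤ d * (a * d - (r^2 + i^2)) := by
    have := key (ρ 1 1) (-((starRingEnd ℂ) (ρ 0 1)))
    rw [h10] at this
    simp only [Complex.mul_re, Complex.mul_im, Complex.add_re, Complex.add_im,
      Complex.neg_re, Complex.neg_im, Complex.conj_re, Complex.conj_im, h11im] at this
    nlinarith [this]
  have hK : 0 ≤ a * d - (r^2 + i^2) := by nlinarith [hdet1, hdet2, had]
  -- now real analysis
  have hs2 : Real.sqrt 2 ^ 2 = 2 := Real.sq_sqrt (by norm_num)
  have hs1 : 1 ≤ Real.sqrt 2 := by nlinarith [Real.sqrt_nonneg 2, hs2]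
  have h10re : (ρ 1 0).re = r := by rw [h10]; simp [hr']
  rw [h10re]
  have ha1 : a ≤ 1 := by linarith
  -- r ≤ sqrt(a*d)
  set t := Real.sqrt (a * d) with ht'
  have ht0 : 0 ≤ t := Real.sqrt_nonneg _
  have ht2 : t^2 = a * d := Real.sq_sqrt (by positivity)
  have hrt : r ≤ t := by
    have h1 : r ≤ |r| := le_abs_self r
    have h2 : |r| = Real.sqrt (r^2) := (Real.sqrt_sq_eq_abs r).symm
    have h3 : Real.sqrt (r^2) ≤ Real.sqrt (a*d) := Real.sqrt_le_sqrt (by nlinarith)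
    linarith
  have h4 : 0 < 1 + Real.sqrt 2 - 2*a + 2*t := by nlinarith
  nlinarith [sq_nonneg (4*a - 2 - Real.sqrt 2), h4, hs2, ht2, hrt]

def vOpt : Fin 2 → ℂ := ![(Real.cos (Real.pi/8) : ℝ), (Real.sin (Real.pi/8) : ℝ)]

lemma exist_part : ∃ ρ : Matrix (Fin 2) (Fin 2) ℂ, ρ.PosSemidef ∧ ρ.trace = 1 ∧
    ((M * ρ).trace).re = Real.cos (Real.pi / 8) ^ 2 := by
  refine ⟨Matrix.vecMulVec vOpt (star vOpt), ?_, ?_, ?_⟩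
  · have h : Matrix.vecMulVec vOpt (star vOpt) =
        Matrix.conjTranspose (Matrix.replicateRow (Fin 1) (star vOpt)) * (Matrix.replicateRow (Fin 1) (star vOpt)) := by
      rw [Matrix.conjTranspose_replicateRow, star_star]; exact Matrix.vecMulVec_eq (Fin 1) _ _
    rw [h]
    exact Matrix.posSemidef_conjTranspose_mul_self _
  · simp only [Matrix.trace, Fin.sum_univ_two, Matrix.diag_apply, Matrix.vecMulVec_apply,
      vOpt, Matrix.cons_val_zero, Matrix.cons_val_one, Matrix.head_cons, Pi.star_apply,
      RCLike.star_def, Complex.conj_ofReal]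
    norm_cast
    rw [← Real.sin_sq_add_cos_sq (Real.pi/8)]; ring
  · rw [trace_formula]
    simp only [Matrix.vecMulVec_apply, vOpt, Matrix.cons_val_zero, Matrix.cons_val_one,
      Matrix.head_cons, Pi.star_apply, RCLike.star_def, Complex.conj_ofReal]
    norm_cast
    set c := Real.cos (Real.pi/8)
    set s := Real.sin (Real.pi/8)
    have h1 : s^2 + c^2 = 1 := Real.sin_sq_add_cos_sq _
    have h2 : 2 * s * c = Real.sqrt 2 / 2 := by
      have := Real.sin_two_mul (Real.pi/8)
      rw [show 2 * (Real.pi/8) = Real.pi/4 by ring, Real.sin_pi_div_four] at this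
      linarith [this]
    have h3 : c^2 = 1/2 + Real.sqrt 2/4 := cos_sq_val
    nlinarith [h1, h2, h3]

theorem alice_cheating_bound :
    (∀ ρ : Matrix (Fin 2) (Fin 2) ℂ, ρ.PosSemidef → ρ.trace = 1 →
      ((M * ρ).trace).re ≤ Real.cos (Real.pi / 8) ^ 2) ∧
    (∃ ρ : Matrix (Fin 2) (Fin 2) ℂ, ρ.PosSemidef ∧ ρ.trace = 1 ∧
      ((M * ρ).trace).re = Real.cos (Real.pi / 8) ^ 2) := by
  exact ⟨bound_part, exist_part⟩
end
end

section
/- Perfect hedging correctness: for each i ∈ {0,1,2,3}, conditioned on Alice receiving the two-bit message γ_i and the left register collapsing to |α_i⟩, Alice's honest measurement (measuring qubit j in the Hadamard basis if the j-th bit of γ_i is 1, and in the computational basis otherwise) produces with probability 1 outcomes in which Bob wins exactly one of the two coin flips. For example, |α_0⟩ = (|+−⟩ − |−+⟩)/√2 measured in the Hadamard basis on both qubits yields outcomes (+,−) or (−,+), each a single win for Bob. -/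
noncomputable section

def ket1 : Fin 2 → ℂ := ![0, 1]
def ketM : Fin 2 → ℂ := ![(Real.sqrt 2)⁻¹, -(Real.sqrt 2)⁻¹]

/-- computational basis of one qubit -/
def ket (b : Fin 2) : Fin 2 → ℂ := fun i => if i = b then 1 else 0

/-- tensor product of two single-qubit states -/
def tp (u v : Fin 2 → ℂ) : Fin 2 × Fin 2 → ℂ := fun p => u p.1 * v p.2

/-- tensor product of two two-qubit states -/
def tp2 (u v : Fin 2 × Fin 2 → ℂ) : (Fin 2 × Fin 2) × (Fin 2 × Fin 2) → ℂ :=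
  fun p => u p.1 * v p.2

/-- the states |α_i⟩ -/
def alpha : Fin 4 → (Fin 2 × Fin 2 → ℂ) :=
  ![((Real.sqrt 2 : ℂ))⁻¹ • (tp ket0 ket0 - tp ket1 ket1),
    ((Real.sqrt 2 : ℂ))⁻¹ • (tp ket0 ket1 + tp ket1 ket0),
    ((Real.sqrt 2 : ℂ))⁻¹ • (tp ket0 ketM + tp ket1 ketP),
    ((Real.sqrt 2 : ℂ))⁻¹ • (tp ketM ket0 + tp ketP ket1)]

/-- inner product on two-qubit states -/
def dot (u v : Fin 2 × Fin 2 → ℂ) : ℂ := ∑ p : Fin 2 × Fin 2, star (u p) * v p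

/-- the measurement-basis vector of one qubit: if `had` Alice measures in the
Hadamard basis (Bob wins on outcome −), otherwise in the computational basis
(Bob wins on outcome 1). `bobWins` records whether the outcome is Bob's
winning outcome for that flip. -/
def basisVec (had bobWins : Bool) : Fin 2 → ℂ :=
  if had then (if bobWins then ketM else ketP)
  else (if bobWins then ket1 else ket0)

/-- the bits of the messages γ_0 = 11, γ_1 = 00, γ_2 = 01, γ_3 = 10,
determining Alice's measurement bases for the two qubits -/
def msg : Fin 4 → Bool × Bool :=
  ![(true, true), (false, false), (false, true), (true, false)]

set_option maxHeartbeats 4000000 in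
/-- Perfect hedging correctness: conditioned on Alice receiving message γ_i and
her register collapsing to |α_i⟩, any measurement outcome with nonzero
amplitude has Bob winning exactly one of the two coin flips. -/
theorem perfect_hedging_correctness :
    ∀ (i : Fin 4) (o₁ o₂ : Bool),
      dot (tp (basisVec (msg i).1 o₁) (basisVec (msg i).2 o₂)) (alpha i) ≠ 0 →
      o₁ ≠ o₂ := by
  intro i o₁ o₂ h heq
  apply h
  subst heq
  fin_cases i <;> cases o₁ <;>
    simp [alpha, msg, basisVec, dot, tp, Fintype.sum_prod_type,
      Fin.sum_univ_two, ket0, ket1, ketP, ketM, Complex.ext_iff]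
end
end
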